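/- arXiv:math/9411223 — 2 statements merged into one kernel-verified Lean document; each statement's English description precedes it below -/
import Mathlib

section
/- If a finite graph G has a vertex cover of cardinality m, then G has at most 2^m distinct minimal vertex covers. -/
open SimpleGraph

variable {V : Type*}

/-- `C` is a vertex cover of `G`: every edge has an endpoint in `C`. -/
def IsVertexCover (G : SimpleGraph V) (C : Set V) : Prop :=
  ∀ ⦃u v : V⦄, G.Adj u v → u ∈ C ∨ v ∈ C

/-- `C` is a minimal vertex cover: a vertex cover with no proper subset a vertex cover. -/
def IsMinVertexCover (G : SimpleGraph V) (C : Set V) : Prop :=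
  _root_.IsVertexCover G C ∧ ∀ D : Set V, D ⊂ C → ¬ _root_.IsVertexCover G D

/-- `S` is an independent set of `G`. -/
def IsIndepSet (G : SimpleGraph V) (S : Set V) : Prop :=
  ∀ ⦃u⦄, u ∈ S → ∀ ⦃v⦄, v ∈ S → ¬ G.Adj u v

/-- `D` is a dominating set of `G`. -/
def IsDomSet (G : SimpleGraph V) (D : Set V) : Prop :=
  ∀ v : V, v ∉ D → ∃ u ∈ D, G.Adj u v

/-- The closed neighborhood `N[x]` of `x`. -/
def closedNbhd (G : SimpleGraph V) (x : V) : Set V :=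
  insert x (G.neighborSet x)

namespace IsVertexCover

variable {G : SimpleGraph V} {C : Set V}

theorem mem_of_adj_of_notMem {v x : V} (hC : _root_.IsVertexCover G C) (hvx : G.Adj v x)
    (hx : x ∉ C) : v ∈ C :=
  (hC hvx).resolve_right hx

theorem diff_singleton {v : V} (hC : _root_.IsVertexCover G C) (hv : ∀ x, G.Adj v x → x ∈ C) :
    _root_.IsVertexCover G (C \ {v}) := by
  have cover : ∀ ⦃u w⦄, G.Adj u w → u ∈ C → u ∈ C \ {v} ∨ w ∈ C \ {v} := by
    intro u w huw hu
    by_cases huv : u = v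
    · subst huv
      exact .inr ⟨hv w huw, huw.ne.symm⟩
    · exact .inl ⟨hu, huv⟩
  intro u w huw
  rcases hC huw with hu | hw
  · exact cover huw hu
  · exact (cover huw.symm hw).symm

end IsVertexCover

namespace IsMinVertexCover

variable {G : SimpleGraph V} {D D' : Set V}

theorem exists_adj_notMem {v : V} (hD : IsMinVertexCover G D) (hv : v ∈ D) :
    ∃ x, G.Adj v x ∧ x ∉ D := by
  by_contra! hN
  exact hD.2 _ (Set.sdiff_singleton_ssubset.mpr hv) (hD.1.diff_singleton hN)

/-- Outside a vertex cover `C`, a minimal vertex cover `D` contains exactly the vertices with a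
neighbour in `C \ D`; so `D` is determined by `D ∩ C`. -/
theorem subset_of_inter_eq {C : Set V} (hC : _root_.IsVertexCover G C)
    (hD : IsMinVertexCover G D) (hD' : _root_.IsVertexCover G D') (h : D ∩ C = D' ∩ C) :
    D ⊆ D' := by
  intro v hv
  by_cases hvC : v ∈ C
  · exact (h ▸ ⟨hv, hvC⟩ : v ∈ D' ∩ C).1
  obtain ⟨x, hvx, hxD⟩ := hD.exists_adj_notMem hv
  have hxC : x ∈ C := (hC hvx).resolve_left hvC
  have hxD' : x ∉ D' := fun hxD' => hxD (h ▸ ⟨hxD', hxC⟩ : x ∈ D ∩ C).1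
  exact hD'.mem_of_adj_of_notMem hvx hxD'

theorem injOn_inter {C : Set V} (hC : _root_.IsVertexCover G C) :
    {D | IsMinVertexCover G D}.InjOn (· ∩ C) := fun _ hD _ hD' h =>
  (hD.subset_of_inter_eq hC hD'.1 h).antisymm (hD'.subset_of_inter_eq hC hD.1 h.symm)

end IsMinVertexCover

theorem stmt0 [Fintype V] (G : SimpleGraph V) (m : ℕ)
    (h : ∃ C : Set V, _root_.IsVertexCover G C ∧ C.ncard = m) :
    {C : Set V | IsMinVertexCover G C}.ncard ≤ 2 ^ m := by
  obtain ⟨C, hC, rfl⟩ := h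
  calc {D : Set V | IsMinVertexCover G D}.ncard
      ≤ (𝒫 C).ncard :=
        Set.ncard_le_ncard_of_injOn _ (fun _ _ => Set.inter_subset_right)
          (IsMinVertexCover.injOn_inter hC)
    _ = 2 ^ C.ncard := Set.ncard_powerset C
end

section
/- Fix a minimal vertex cover A of a finite graph G. The map sending each minimal vertex cover B of G to A ∩ B is injective on the set of minimal vertex covers of G. -/
open SimpleGraph

variable {V : Type*}

lemma IsVertexCover.diff_singleton_s5 {G : SimpleGraph V} {C : Set V}
    (hC : _root_.IsVertexCover G C) {v : V} (hN : ∀ y, G.Adj v y → y ∈ C) :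
    _root_.IsVertexCover G (C \ {v}) := by
  intro u w huw
  by_cases hu : u = v
  · subst hu
    exact Or.inr ⟨hN w huw, fun hw => G.loopless.irrefl _ (hw ▸ huw)⟩
  by_cases hw : w = v
  · subst hw
    exact Or.inl ⟨hN u huw.symm, hu⟩
  exact (hC huw).imp (fun h => ⟨h, hu⟩) (fun h => ⟨h, hw⟩)

lemma IsMinVertexCover.exists_adj_notMem_s5 {G : SimpleGraph V} {B : Set V}
    (hB : IsMinVertexCover G B) {v : V} (hv : v ∈ B) : ∃ y, G.Adj v y ∧ y ∉ B := by
  by_contra! hN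
  exact hB.2 (B \ {v}) (Set.sdiff_singleton_ssubset.2 hv) (hB.1.diff_singleton_s5 hN)

/-- A vertex of `B` outside `A` has a neighbour outside `B`, which `A` must then cover; so
`B' ⊇ A ∩ B` cannot contain that neighbour and has to contain the vertex itself. -/
lemma IsMinVertexCover.subset_of_inter_eq_s5 {G : SimpleGraph V} {A B B' : Set V}
    (hA : _root_.IsVertexCover G A) (hB : IsMinVertexCover G B) (hB' : _root_.IsVertexCover G B')
    (hAB : A ∩ B = A ∩ B') : B ⊆ B' := by
  intro v hv
  by_cases hvA : v ∈ A
  · exact (hAB ▸ ⟨hvA, hv⟩ : v ∈ A ∩ B').2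
  obtain ⟨y, hvy, hyB⟩ := hB.exists_adj_notMem_s5 hv
  have hyA : y ∈ A := (hA hvy).resolve_left hvA
  have hyB' : y ∉ B' := fun hy => hyB (hAB ▸ ⟨hyA, hy⟩ : y ∈ A ∩ B).2
  exact (hB' hvy).resolve_right hyB'

theorem stmt5_general (G : SimpleGraph V) (A : Set V)
    (hA : IsMinVertexCover G A) :
    Set.InjOn (fun B : Set V => A ∩ B) {B : Set V | IsMinVertexCover G B} :=
  fun _ hB _ hB' hAB =>
    (hB.subset_of_inter_eq_s5 hA.1 hB'.1 hAB).antisymm (hB'.subset_of_inter_eq_s5 hA.1 hB.1 hAB.symm)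

theorem stmt5 [Fintype V] (G : SimpleGraph V) (A : Set V)
    (hA : IsMinVertexCover G A) :
    Set.InjOn (fun B : Set V => A ∩ B) {B : Set V | IsMinVertexCover G B} :=
  stmt5_general G A hA
end
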